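/- (Lemme 4, specialized to K = ℚ_p, d = p, r = 0) Let p be an odd prime, let e₁, e₂ ∈ ℤ_p be units, and let x ∈ ℤ_p be a unit whose residue t in ZMod p (via the reduction map ℤ_p → ZMod p) is distinct from the residues ε₁ of e₁ and ε₂ of e₂. Then there exist y, z ∈ ℚ_p with y² − p·z² = x·(x − e₁)·(x − e₂) if and only if t·(t − ε₁)·(t − ε₂) is a square in ZMod p. -/

import Mathlib

/-!
Since `t ∉ {0, ε₁, ε₂}`, `u = x (x - e₁) (x - e₂)` is a unit of `ℤ_p`. If `y² - p z² = u` in `ℚ_p`,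
the valuations `2 v(y)` and `1 + 2 v(z)` of `y²` and `p z²` differ, so by the ultrametric
inequality both terms are integral; hence `y, z ∈ ℤ_p` and reducing modulo `p` gives
`t (t - ε₁) (t - ε₂) = ȳ²`. Conversely, for odd `p` Hensel's lemma lifts a square root of the
nonzero residue of `u` to a square root `w` of `u` in `ℤ_p`, and `u = w² - p · 0²`.
-/

open Polynomial

namespace Padic

variable {p : ℕ} [Fact p.Prime]

theorem valuation_p_mul_sq {z : ℚ_[p]} (hz : z ≠ 0) :
    ((p : ℚ_[p]) * z ^ 2).valuation = 1 + 2 * z.valuation := by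
  rw [valuation_mul (by exact_mod_cast (Fact.out : p.Prime).ne_zero) (pow_ne_zero 2 hz),
    valuation_p, valuation_pow]
  norm_cast

theorem norm_sq_ne_norm_p_mul_sq (y : ℚ_[p]) {z : ℚ_[p]} (hz : z ≠ 0) :
    ‖y ^ 2‖ ≠ ‖(p : ℚ_[p]) * z ^ 2‖ := by
  have hpz : (p : ℚ_[p]) * z ^ 2 ≠ 0 :=
    mul_ne_zero (by exact_mod_cast (Fact.out : p.Prime).ne_zero) (pow_ne_zero 2 hz)
  rcases eq_or_ne y 0 with rfl | hy
  · simpa using hpz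
  have hp : (1 : ℝ) < p := by exact_mod_cast (Fact.out : p.Prime).one_lt
  rw [norm_eq_zpow_neg_valuation (pow_ne_zero 2 hy), norm_eq_zpow_neg_valuation hpz,
    Ne, zpow_right_inj₀ (by positivity) hp.ne', valuation_pow, valuation_p_mul_sq hz]
  omega

theorem norm_le_one_of_norm_sq_sub_p_mul_sq_le_one {y z : ℚ_[p]}
    (h : ‖y ^ 2 - p * z ^ 2‖ ≤ 1) : ‖y‖ ≤ 1 ∧ ‖z‖ ≤ 1 := by
  rcases eq_or_ne z 0 with rfl | hz
  · simpa [norm_pow, pow_le_one_iff_of_nonneg] using h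
  have hmax := IsUltrametricDist.norm_add_eq_max_of_norm_ne_norm
    (by rw [norm_neg]; exact norm_sq_ne_norm_p_mul_sq y hz : ‖y ^ 2‖ ≠ ‖-((p : ℚ_[p]) * z ^ 2)‖)
  rw [← sub_eq_add_neg, norm_neg] at hmax
  rw [hmax, max_le_iff] at h
  refine ⟨by simpa [norm_pow, pow_le_one_iff_of_nonneg] using h.1, ?_⟩
  have hv := (norm_le_one_iff_val_nonneg _).mp h.2
  rw [valuation_p_mul_sq hz] at hv
  rw [norm_le_one_iff_val_nonneg]
  omega

end Padic

namespace PadicInt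

variable {p : ℕ} [Fact p.Prime]

theorem isUnit_iff_toZMod_ne_zero {z : ℤ_[p]} : IsUnit z ↔ toZMod z ≠ 0 := by
  rw [Ne, ← RingHom.mem_ker, ker_toZMod, IsLocalRing.mem_maximalIdeal, mem_nonunits_iff, not_not]

theorem norm_lt_one_iff_toZMod_eq_zero {z : ℤ_[p]} : ‖z‖ < 1 ↔ toZMod z = 0 := by
  rw [← mem_nonunits, mem_nonunits_iff, isUnit_iff_toZMod_ne_zero, not_not]

theorem isSquare_of_isSquare_toZMod (hp : p ≠ 2) {u : ℤ_[p]} (hu : IsUnit u)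
    (h : IsSquare (toZMod u)) : IsSquare u := by
  obtain ⟨b, hb⟩ := h
  obtain ⟨a, rfl⟩ := ZMod.ringHom_surjective toZMod b
  have ha : IsUnit a := by
    rw [isUnit_iff_toZMod_ne_zero] at hu ⊢
    intro ha
    exact hu (by rw [hb, ha, mul_zero])
  have h2 : IsUnit (2 : ℤ_[p]) := by
    rw [isUnit_iff_toZMod_ne_zero, map_ofNat]
    exact Ring.two_ne_zero (by rwa [ZMod.ringChar_zmod_n])
  have hderiv : ‖(X ^ 2 - C u).derivative.aeval a‖ = 1 := by
    simp [derivative_pow, isUnit_iff.mp h2, isUnit_iff.mp ha]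
  have hval : ‖(X ^ 2 - C u).aeval a‖ < ‖(X ^ 2 - C u).derivative.aeval a‖ ^ 2 := by
    rw [hderiv, one_pow, norm_lt_one_iff_toZMod_eq_zero]
    simp [hb, sq]
  obtain ⟨w, hw, -⟩ := hensels_lemma hval
  exact ⟨w, (sub_eq_zero.mp (by simpa [sq] using hw)).symm⟩


theorem isSquare_toZMod_of_sq_sub_p_mul_sq {u : ℤ_[p]} {y z : ℚ_[p]}
    (h : y ^ 2 - p * z ^ 2 = u) : IsSquare (toZMod u) := by
  obtain ⟨hy, hz⟩ : ‖y‖ ≤ 1 ∧ ‖z‖ ≤ 1 :=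
    Padic.norm_le_one_of_norm_sq_sub_p_mul_sq_le_one (by rw [h, ← norm_def]; exact u.norm_le_one)
  set Y : ℤ_[p] := ⟨y, hy⟩
  set Z : ℤ_[p] := ⟨z, hz⟩
  have hu : Y ^ 2 - p * Z ^ 2 = u := Subtype.ext (by push_cast; exact h)
  refine ⟨toZMod Y, ?_⟩
  rw [← hu, map_sub, map_mul, map_natCast, ZMod.natCast_self, zero_mul, sub_zero, map_pow, sq]

theorem exists_sq_sub_p_mul_sq_iff_isSquare_toZMod (hp : p ≠ 2) {u : ℤ_[p]} (hu : IsUnit u) :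
    (∃ y z : ℚ_[p], y ^ 2 - p * z ^ 2 = u) ↔ IsSquare (toZMod u) := by
  refine ⟨fun ⟨_, _, h⟩ => isSquare_toZMod_of_sq_sub_p_mul_sq h, fun h => ?_⟩
  obtain ⟨w, rfl⟩ := isSquare_of_isSquare_toZMod hp hu h
  exact ⟨w, 0, by push_cast; ring⟩

end PadicInt

theorem lemme4_Qp_general (p : ℕ) [Fact p.Prime] (hp : p ≠ 2)
    (e₁ e₂ x : ℤ_[p]) (hx : IsUnit x)
    (ht₁ : PadicInt.toZMod x ≠ PadicInt.toZMod e₁)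
    (ht₂ : PadicInt.toZMod x ≠ PadicInt.toZMod e₂) :
    (∃ y z : ℚ_[p], y ^ 2 - p * z ^ 2 = ((x * (x - e₁) * (x - e₂) : ℤ_[p]) : ℚ_[p])) ↔
      IsSquare (PadicInt.toZMod x * (PadicInt.toZMod x - PadicInt.toZMod e₁) *
        (PadicInt.toZMod x - PadicInt.toZMod e₂)) := by
  have hu : IsUnit (x * (x - e₁) * (x - e₂)) := by
    rw [PadicInt.isUnit_iff_toZMod_ne_zero, map_mul, map_mul, map_sub, map_sub]
    exact mul_ne_zero (mul_ne_zero (PadicInt.isUnit_iff_toZMod_ne_zero.mp hx)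
      (sub_ne_zero.mpr ht₁)) (sub_ne_zero.mpr ht₂)
  rw [PadicInt.exists_sq_sub_p_mul_sq_iff_isSquare_toZMod hp hu, map_mul, map_mul, map_sub, map_sub]

/-- (Lemme 4, specialized to `K = ℚ_p`, `d = p`, `r = 0`) For units `e₁, e₂, x` of
`ℤ_p` (p odd) whose residues are `ε₁, ε₂, t` with `t ≠ ε₁` and `t ≠ ε₂`, the element
`x·(x − e₁)·(x − e₂)` is of the form `y² − p·z²` with `y, z ∈ ℚ_p` if and only if
`t·(t − ε₁)·(t − ε₂)` is a square in `ZMod p`. -/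
theorem lemme4_Qp (p : ℕ) [Fact p.Prime] (hp : p ≠ 2)
    (e₁ e₂ x : ℤ_[p]) (he₁ : IsUnit e₁) (he₂ : IsUnit e₂) (hx : IsUnit x)
    (ht₁ : PadicInt.toZMod x ≠ PadicInt.toZMod e₁)
    (ht₂ : PadicInt.toZMod x ≠ PadicInt.toZMod e₂) :
    (∃ y z : ℚ_[p], y ^ 2 - p * z ^ 2 = ((x * (x - e₁) * (x - e₂) : ℤ_[p]) : ℚ_[p])) ↔
      IsSquare (PadicInt.toZMod x * (PadicInt.toZMod x - PadicInt.toZMod e₁) *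
        (PadicInt.toZMod x - PadicInt.toZMod e₂)) :=
  lemme4_Qp_general p hp e₁ e₂ x hx ht₁ ht₂
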